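/- Suppose π is an n-qubit permutation gate and m with 0 ≤ m ≤ n is such that π Xᵢ π⁻¹ ∈ 𝒫ₙ for all i = 1, …, m and π Zⱼ π⁻¹ ∈ 𝒫ₙ for all j = m+1, …, n. Then there exist Clifford permutation gates φ₁, φ₂ and a mismatch-free product μ of C*X gates such that π = φ₁ μ φ₂. -/

import Mathlib

open Matrix

/-- An `n`-qubit gate: a `2^n × 2^n` complex matrix with rows and columns indexed
by bitstrings `v ∈ 𝔽₂ⁿ`. -/
abbrev Gate (n : ℕ) := Matrix (Fin n → ZMod 2) (Fin n → ZMod 2) ℂ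

def IsUnitaryGate {n : ℕ} (U : Gate n) : Prop :=
  U ∈ Matrix.unitaryGroup (Fin n → ZMod 2) ℂ

/-- The Pauli group `𝒫ₙ`: all matrices `c · X^u Z^v` with `c ∈ {1, -1, i, -i}`,
which is exactly the set of matrices `c · P₁ ⊗ ⋯ ⊗ Pₙ` with `Pⱼ ∈ {I₂, X, Y, Z}`. -/
def PauliGroup (n : ℕ) : Set (Gate n) :=
  { P | ∃ (c : ℂ) (u v : Fin n → ZMod 2),
      (c = 1 ∨ c = -1 ∨ c = Complex.I ∨ c = -Complex.I) ∧
      P = Matrix.of fun a b =>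
        if a = b + u then c * (-1 : ℂ) ^ (∑ i, (v i * b i).val) else 0 }

/-- The Clifford hierarchy: `𝒞₁ = 𝒫ₙ`, and for `k ≥ 2`,
`𝒞ₖ = {U unitary : U P U† ∈ 𝒞ₖ₋₁ for all P ∈ 𝒫ₙ}`.  (`CliffordHierarchy n k` is `𝒞ₖ`.) -/
def CliffordHierarchy (n : ℕ) : ℕ → Set (Gate n)
  | 0 => PauliGroup n
  | 1 => PauliGroup n
  | k + 2 => { U | IsUnitaryGate U ∧
      ∀ P ∈ PauliGroup n, U * P * Uᴴ ∈ CliffordHierarchy n (k + 1) }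

/-- The permutation gate mapping `|v⟩` to `|σ v⟩`. -/
def permGate {n : ℕ} (σ : Equiv.Perm (Fin n → ZMod 2)) : Gate n :=
  Matrix.of fun a b => if a = σ b then 1 else 0

def IsPermGate {n : ℕ} (U : Gate n) : Prop := ∃ σ, U = permGate σ

def IsDiagonalGate {n : ℕ} (U : Gate n) : Prop :=
  IsUnitaryGate U ∧ ∀ a b, a ≠ b → U a b = 0

/-- A gate is semi-Clifford if it is `φ₁ d φ₂` with `φ₁, φ₂` Clifford and `d` a diagonal gate. -/
def IsSemiClifford {n : ℕ} (U : Gate n) : Prop :=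
  ∃ φ₁ d φ₂ : Gate n, φ₁ ∈ CliffordHierarchy n 2 ∧ φ₂ ∈ CliffordHierarchy n 2 ∧
    IsDiagonalGate d ∧ U = φ₁ * d * φ₂

def IsCliffordPerm {n : ℕ} (U : Gate n) : Prop :=
  IsPermGate U ∧ U ∈ CliffordHierarchy n 2

/-- Action of a `C*X` gate with control set `S` and target `t` on a bitstring. -/
def cxFun {n : ℕ} (S : Finset (Fin n)) (t : Fin n) (a : Fin n → ZMod 2) :
    Fin n → ZMod 2 :=
  Function.update a t (a t + ∏ i ∈ S, a i)

/-- The `C*X` gate with control set `S` and target `t`. -/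
def cxGate {n : ℕ} (S : Finset (Fin n)) (t : Fin n) : Gate n :=
  Matrix.of fun a b => if a = cxFun S t b then 1 else 0

/-- `μ` is the product of the `C*X` gates recorded in the list `l`
(each entry: control set and target, with the target not a control of the same gate). -/
def IsCXProduct {n : ℕ} (l : List (Finset (Fin n) × Fin n)) (μ : Gate n) : Prop :=
  (∀ g ∈ l, g.2 ∉ g.1) ∧ μ = (l.map fun g => cxGate g.1 g.2).prod

/-- A product of `C*X` gates is mismatch-free if no qubit occurs both as a target
of some gate and as a control of some gate. -/
def MismatchFree {n : ℕ} (l : List (Finset (Fin n) × Fin n)) : Prop :=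
  ∀ g ∈ l, ∀ g' ∈ l, g.2 ∉ g'.1

/-- The `X`-type gate `X^u`, mapping `|v⟩` to `|v + u⟩`. -/
def xGate {n : ℕ} (u : Fin n → ZMod 2) : Gate n :=
  Matrix.of fun a b => if a = b + u then 1 else 0

/-- The `Z`-type gate `Z^v`, multiplying `|a⟩` by `(-1)^(v·a)`. -/
def zGate {n : ℕ} (v : Fin n → ZMod 2) : Gate n :=
  Matrix.of fun a b => if a = b then (-1 : ℂ) ^ (∑ i, (v i * a i).val) else 0

/-!
Let `σ` be the permutation of `𝔽₂ⁿ` underlying `π`, let `s` be the set of `X`-qubits, and let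
`α` be the affine map that agrees with `σ` at `0` and at the unit vectors. The `X`-conditions say
that `σ (a + x) = σ a + α.linear x` whenever `x` is supported on `s`. The `Z`-conditions say that
the coordinates of `σ⁻¹` off `s` are affine, so `σ⁻¹ ∘ α` fixes those coordinates. Together these
give `σ⁻¹ (α a) = a + g a`, where `g a` is supported on `s` and depends only on the coordinates
off `s`. Then `τ a = a + g a` is an involution, so `α = σ ∘ τ` is an affine bijection (a Clifford
permutation) and `σ = α ∘ τ`. Writing each coordinate of `g` in algebraic normal form in the
variables off `s` expresses `τ` as a product of `C*X` gates with controls off `s` and targets in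
`s`. Such a product is mismatch-free.
-/

section Sign

variable {R : Type*} [Ring R]

lemma neg_one_pow_val_add (x y : ZMod 2) :
    (-1 : R) ^ (x + y).val = (-1) ^ x.val * (-1) ^ y.val := by
  rw [← pow_add, neg_one_pow_eq_pow_mod_two, ZMod.val_add, Nat.mod_mod,
    ← neg_one_pow_eq_pow_mod_two]

lemma neg_one_pow_sum_val {ι : Type*} (t : Finset ι) (f : ι → ZMod 2) :
    (-1 : R) ^ (∑ i ∈ t, (f i).val) = (-1) ^ (∑ i ∈ t, f i).val := by
  classical
  induction t using Finset.induction_on with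
  | empty => simp
  | insert i t hi ih =>
    rw [Finset.sum_insert hi, Finset.sum_insert hi, pow_add, ih, neg_one_pow_val_add]

end Sign

lemma neg_one_pow_val_injective : Function.Injective fun x : ZMod 2 => (-1 : ℂ) ^ x.val := by
  intro x y h
  revert h
  fin_cases x <;> fin_cases y <;> norm_num [ZMod.val] <;> rfl

lemma zmod_two_eq_zero_or_one (x : ZMod 2) : x = 0 ∨ x = 1 := by
  revert x
  decide

section AffineInterp

variable {R ι M N : Type*} [CommRing R] [Fintype ι] [DecidableEq ι]
  [AddCommGroup M] [Module R M] [AddCommGroup N] [Module R N]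

def affineInterp (f : (ι → R) → M) : (ι → R) →ᵃ[R] M :=
  (Fintype.linearCombination R fun k => f (Pi.single k 1) - f 0).toAffineMap +
    AffineMap.const R (ι → R) (f 0)

lemma affineInterp_apply (f : (ι → R) → M) (a : ι → R) :
    affineInterp f a = ∑ k, a k • (f (Pi.single k 1) - f 0) + f 0 := rfl

lemma affineInterp_linear_single (f : (ι → R) → M) (k : ι) :
    (affineInterp f).linear (Pi.single k 1) = f (Pi.single k 1) - f 0 := by
  simp [affineInterp]

lemma AffineMap.map_affineInterp (φ : M →ᵃ[R] N) (f : (ι → R) → M) (a : ι → R) :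
    φ (affineInterp f a) = affineInterp (φ ∘ f) a := by
  rw [affineInterp_apply, ← vadd_eq_add, φ.map_vadd, map_sum]
  simp only [map_smul, ← vsub_eq_sub, φ.linearMap_vsub]
  rfl

lemma affineInterp_coord_apply (j : ι) (a : ι → R) :
    affineInterp (fun x : ι → R => x j) a = a j := by
  simp [affineInterp_apply, Pi.single_apply]

end AffineInterp

section Gates

variable {n : ℕ}

def funGate : Function.End (Fin n → ZMod 2) →* Gate n where
  toFun f := of fun a b => if a = f b then 1 else 0
  map_one' := by ext a b; simp [one_apply, Function.End.one_def]
  map_mul' f g := by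
    ext a b
    simp [mul_apply, Function.End.mul_def]
    rfl

lemma permGate_mul (σ τ : Equiv.Perm (Fin n → ZMod 2)) :
    permGate σ * permGate τ = permGate (σ * τ) :=
  (funGate.map_mul ⇑σ ⇑τ).symm

lemma permGate_one : permGate (1 : Equiv.Perm (Fin n → ZMod 2)) = 1 := funGate.map_one

lemma inv_permGate (σ : Equiv.Perm (Fin n → ZMod 2)) : (permGate σ)⁻¹ = permGate σ⁻¹ :=
  inv_eq_right_inv (by rw [permGate_mul, mul_inv_cancel, permGate_one])

lemma conjTranspose_permGate (σ : Equiv.Perm (Fin n → ZMod 2)) :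
    (permGate σ)ᴴ = permGate σ⁻¹ := by
  ext a b
  simp [permGate, conjTranspose_apply, Equiv.eq_symm_apply, eq_comm, apply_ite]

lemma isUnitaryGate_permGate (σ : Equiv.Perm (Fin n → ZMod 2)) : IsUnitaryGate (permGate σ) := by
  rw [IsUnitaryGate, mem_unitaryGroup_iff, star_eq_conjTranspose, conjTranspose_permGate,
    permGate_mul, mul_inv_cancel, permGate_one]

lemma permGate_mul_mul_permGate_inv (σ : Equiv.Perm (Fin n → ZMod 2)) (M : Gate n) :
    permGate σ * M * permGate σ⁻¹ = M.submatrix ⇑σ⁻¹ ⇑σ⁻¹ := by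
  ext a b
  simp [permGate, mul_apply, eq_comm (a := a), ← Equiv.eq_symm_apply]

lemma zGate_eq_diagonal (v : Fin n → ZMod 2) :
    zGate v = diagonal fun a => (-1 : ℂ) ^ (v ⬝ᵥ a).val := by
  ext a b
  simp [zGate, diagonal_apply, neg_one_pow_sum_val, dotProduct]

lemma exists_add_of_permGate_mem_pauliGroup {ρ : Equiv.Perm (Fin n → ZMod 2)}
    (h : permGate ρ ∈ PauliGroup n) : ∃ w, ∀ b, ρ b = b + w := by
  obtain ⟨c, u, v, -, hP⟩ := h
  refine ⟨u, fun b => by_contra fun hb => ?_⟩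
  simpa [permGate, hb] using congr_fun₂ hP (ρ b) b

lemma exists_dotProduct_of_diagonal_mem_pauliGroup (f : (Fin n → ZMod 2) → ZMod 2)
    (h : diagonal (fun a => (-1 : ℂ) ^ (f a).val) ∈ PauliGroup n) :
    ∃ r c, ∀ a, f a = r ⬝ᵥ a + c := by
  obtain ⟨c, u, r, -, hP⟩ := h
  have hsign : ∀ a, (-1 : ℂ) ^ (f a).val = c * (-1) ^ (r ⬝ᵥ a).val := by
    intro a
    have := congr_fun₂ hP a a
    simp only [diagonal_apply_eq, of_apply, neg_one_pow_sum_val] at this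
    split_ifs at this
    · exact this
    · exact absurd this (pow_ne_zero _ (by norm_num))
  refine ⟨r, f 0, fun a => neg_one_pow_val_injective ?_⟩
  simp only [neg_one_pow_val_add, hsign a, hsign 0, dotProduct_zero, ZMod.val_zero, pow_zero,
    mul_one, mul_comm]

lemma exists_apply_add_of_conj_xGate_mem (σ : Equiv.Perm (Fin n → ZMod 2))
    (u : Fin n → ZMod 2) (h : permGate σ * xGate u * (permGate σ)⁻¹ ∈ PauliGroup n) :
    ∃ w, ∀ a, σ (a + u) = σ a + w := by
  rw [inv_permGate, show xGate u = permGate (Equiv.addRight u) from rfl, permGate_mul,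
    permGate_mul] at h
  obtain ⟨w, hw⟩ := exists_add_of_permGate_mem_pauliGroup h
  exact ⟨w, fun a => by simpa using hw (σ a)⟩

lemma exists_dotProduct_of_conj_zGate_mem (σ : Equiv.Perm (Fin n → ZMod 2))
    (v : Fin n → ZMod 2) (h : permGate σ * zGate v * (permGate σ)⁻¹ ∈ PauliGroup n) :
    ∃ r c, ∀ a, v ⬝ᵥ σ⁻¹ a = r ⬝ᵥ a + c := by
  rw [inv_permGate, permGate_mul_mul_permGate_inv, zGate_eq_diagonal,
    submatrix_diagonal_equiv] at h
  exact exists_dotProduct_of_diagonal_mem_pauliGroup _ h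

lemma permGate_mem_cliffordHierarchy_two (e : (Fin n → ZMod 2) ≃ᵃ[ZMod 2] (Fin n → ZMod 2)) :
    permGate e.toEquiv ∈ CliffordHierarchy n 2 := by
  refine ⟨isUnitaryGate_permGate _, fun P hP => ?_⟩
  obtain ⟨c, u, v, hc, rfl⟩ := hP
  have hshift : ∀ a b, e.symm a = e.symm b + u ↔ a = b + e.linear u := fun a b => by
    rw [← e.apply_eq_iff_eq, e.apply_symm_apply, add_comm, ← vadd_eq_add, e.map_vadd,
      e.apply_symm_apply, vadd_eq_add, add_comm]
  have hsign : ∀ b, v ⬝ᵥ e.symm b =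
      (v ᵥ* LinearMap.toMatrix' e.symm.linear) ⬝ᵥ b + v ⬝ᵥ e.symm 0 := fun b => by
    rw [← dotProduct_mulVec, LinearMap.toMatrix'_mulVec, ← dotProduct_add]
    congr 1
    simpa using e.symm.map_vadd 0 b
  refine ⟨(-1) ^ (v ⬝ᵥ e.symm 0).val * c, e.linear u,
    v ᵥ* LinearMap.toMatrix' e.symm.linear, ?_, ?_⟩
  · rcases neg_one_pow_eq_or ℂ (v ⬝ᵥ e.symm 0).val with h | h <;> rw [h] <;>
      rcases hc with rfl | rfl | rfl | rfl <;> simp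
  · rw [conjTranspose_permGate, permGate_mul_mul_permGate_inv]
    ext a b
    simp only [submatrix_apply, of_apply, neg_one_pow_sum_val]
    change (if e.symm a = e.symm b + u then c * (-1) ^ (v ⬝ᵥ e.symm b).val else 0) =
      if a = b + e.linear u then _ * (-1) ^ ((v ᵥ* LinearMap.toMatrix' e.symm.linear) ⬝ᵥ b).val
      else 0
    simp only [hshift]
    rw [hsign b, neg_one_pow_val_add]
    split_ifs <;> ring

end Gates

section Decomposition

variable {n : ℕ}

lemma map_add_eq_add_affineInterp_linear {M : Type*} [AddCommGroup M] [Module (ZMod 2) M]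
    (f : (Fin n → ZMod 2) → M) (s : Finset (Fin n))
    (hX : ∀ i ∈ s, ∃ w, ∀ a, f (a + Pi.single i 1) = f a + w)
    {x : Fin n → ZMod 2} (hx : ∀ i ∉ s, x i = 0) (a : Fin n → ZMod 2) :
    f (a + x) = f a + (affineInterp f).linear x := by
  let W : AddSubmonoid (Fin n → ZMod 2) :=
    { carrier := {x | ∀ a, f (a + x) = f a + (affineInterp f).linear x}
      add_mem' := fun {x y} hx hy a => by rw [map_add, ← add_assoc, hy, hx, add_assoc]
      zero_mem' := fun a => by simp }
  have hsingle : ∀ i, Pi.single i (x i) ∈ W := by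
    intro i
    by_cases hi : i ∈ s
    · obtain ⟨w, hw⟩ := hX i hi
      have hw' : w = (affineInterp f).linear (Pi.single i 1) := by
        simpa [affineInterp_linear_single, eq_sub_iff_add_eq, add_comm] using (hw 0).symm
      rcases zmod_two_eq_zero_or_one (x i) with h | h
      · rw [h, Pi.single_zero]
        exact W.zero_mem
      · intro a
        rw [h, hw a, hw']
    · rw [hx i hi, Pi.single_zero]
      exact W.zero_mem
  rw [← Finset.univ_sum_single x]
  exact W.sum_mem (fun i _ => hsingle i) a

lemma inv_affineInterp_apply (σ : Equiv.Perm (Fin n → ZMod 2)) {j : Fin n}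
    (hZ : ∃ (r : Fin n → ZMod 2) (c : ZMod 2), ∀ y, σ⁻¹ y j = r ⬝ᵥ y + c)
    (b : Fin n → ZMod 2) : σ⁻¹ (affineInterp σ b) j = b j := by
  obtain ⟨r, c, h⟩ := hZ
  let φ : (Fin n → ZMod 2) →ᵃ[ZMod 2] ZMod 2 :=
    (dotProductBilin (ZMod 2) (ZMod 2) r).toAffineMap + AffineMap.const _ _ c
  have hφ : ∀ y, σ⁻¹ y j = φ y := fun y => by simp [φ, h]
  have hφσ : φ ∘ σ = fun x => x j := funext fun x => by simp [← hφ]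
  rw [hφ, φ.map_affineInterp, hφσ, affineInterp_coord_apply]

theorem exists_affineEquiv_comp_add (σ : Equiv.Perm (Fin n → ZMod 2)) (s : Finset (Fin n))
    (hX : ∀ i ∈ s, ∃ w, ∀ a, σ (a + Pi.single i 1) = σ a + w)
    (hZ : ∀ j ∉ s, ∃ (r : Fin n → ZMod 2) (c : ZMod 2), ∀ y, σ⁻¹ y j = r ⬝ᵥ y + c) :
    ∃ (α : (Fin n → ZMod 2) ≃ᵃ[ZMod 2] (Fin n → ZMod 2))
      (g : (Fin n → ZMod 2) → Fin n → ZMod 2),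
      (∀ a, ∀ i ∉ s, g a i = 0) ∧ (∀ a b, (∀ j ∉ s, a j = b j) → g a = g b) ∧
      ∀ a, σ a = α (a + g a) := by
  set α := affineInterp σ
  let proj (a : Fin n → ZMod 2) : Fin n → ZMod 2 := fun j => if j ∈ s then 0 else a j
  let g a := σ⁻¹ (α (proj a)) + proj a
  have hg_supp : ∀ a, ∀ i ∉ s, g a i = 0 := fun a i hi => by
    show σ⁻¹ (α (proj a)) i + proj a i = 0
    rw [inv_affineInterp_apply σ (hZ i hi), ZModModule.add_self]
  have hg_dep : ∀ a b, (∀ j ∉ s, a j = b j) → g a = g b := fun a b hab => by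
    have : proj a = proj b := funext fun j => by by_cases hj : j ∈ s <;> simp [proj, hj, hab]
    simp only [g, this]
  have hg_add : ∀ a, g (a + g a) = g a := fun a =>
    hg_dep _ _ fun j hj => by rw [Pi.add_apply, hg_supp a j hj, add_zero]
  have hα : ∀ a, α a = σ (a + g a) := fun a => by
    have hx : ∀ i ∉ s, (a + proj a) i = 0 := fun i hi => by simp [proj, hi, ZModModule.add_self]
    calc α a = α (proj a) + α.linear (a + proj a) := by
          rw [add_comm, ← vadd_eq_add, ← α.map_vadd, vadd_eq_add, add_assoc,
            ZModModule.add_self, add_zero]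
      _ = σ (σ⁻¹ (α (proj a)) + (a + proj a)) := by
          rw [map_add_eq_add_affineInterp_linear σ s hX hx, Equiv.Perm.inv_def,
            Equiv.apply_symm_apply]
      _ = σ (a + g a) := by congr 1; simp only [g]; abel
  have hτ : Function.Involutive fun a => a + g a := fun a => by
    simp only [hg_add, add_assoc, ZModModule.add_self, add_zero]
  have hbij : Function.Bijective α := by
    rw [show ⇑α = σ ∘ fun a => a + g a from funext hα]
    exact σ.bijective.comp hτ.bijective
  refine ⟨AffineEquiv.ofBijective hbij, g, hg_supp, hg_dep, fun a => ?_⟩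
  rw [AffineEquiv.ofBijective_apply, hα]
  exact congrArg σ (hτ a).symm

end Decomposition

section CX

variable {n : ℕ}

def monomials (C : Finset (Fin n)) : Set ((Fin n → ZMod 2) → ZMod 2) :=
  {f | ∃ S ⊆ C, f = fun a => ∏ i ∈ S, a i}

lemma coord_mul_mem_closure_monomials {C : Finset (Fin n)} {i : Fin n} (hi : i ∉ C)
    {G : (Fin n → ZMod 2) → ZMod 2} (hG : G ∈ AddSubmonoid.closure (monomials C)) :
    (fun a => a i) * G ∈ AddSubmonoid.closure (monomials (insert i C)) := by
  induction hG using AddSubmonoid.closure_induction with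
  | mem f hf =>
    obtain ⟨S, hS, rfl⟩ := hf
    refine AddSubmonoid.subset_closure ⟨insert i S, Finset.insert_subset_insert _ hS, ?_⟩
    funext a
    simp [Finset.prod_insert fun h => hi (hS h)]
  | zero => simp
  | add f f' _ _ hf hf' => simpa [mul_add] using add_mem hf hf'

theorem mem_closure_monomials (C : Finset (Fin n)) (F : (Fin n → ZMod 2) → ZMod 2)
    (hF : ∀ a b, (∀ i ∈ C, a i = b i) → F a = F b) :
    F ∈ AddSubmonoid.closure (monomials C) := by
  induction C using Finset.induction_on generalizing F with
  | empty =>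
    have hconst : F = fun _ => F 0 := funext fun a => hF a 0 (by simp)
    rcases zmod_two_eq_zero_or_one (F 0) with h | h <;> rw [hconst, h]
    · exact zero_mem _
    · exact AddSubmonoid.subset_closure ⟨∅, subset_rfl, by simp⟩
  | insert i C hi ih =>
    have hupd : ∀ c a b, (∀ j ∈ C, a j = b j) →
        F (Function.update a i c) = F (Function.update b i c) := fun c a b hab =>
      hF _ _ fun j hj => by
        rcases Finset.mem_insert.mp hj with rfl | hj
        · simp
        · have hji : j ≠ i := fun h => hi (h ▸ hj)
          simp [hji, hab j hj]
    -- Shannon expansion in the variable `i`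
    have hdecomp : F = (fun a => F (Function.update a i 0)) + (fun a => a i) *
        fun a => F (Function.update a i 1) + F (Function.update a i 0) := funext fun a => by
      have hself : Function.update a i (a i) = a := Function.update_eq_self i a
      simp only [Pi.add_apply, Pi.mul_apply]
      rcases zmod_two_eq_zero_or_one (a i) with h | h <;> rw [h] at hself ⊢ <;> rw [hself]
      · rw [zero_mul, add_zero]
      · rw [one_mul, add_left_comm, ZModModule.add_self, add_zero]
    rw [hdecomp]
    refine add_mem (AddSubmonoid.closure_mono ?_ (ih _ (hupd 0)))
      (coord_mul_mem_closure_monomials hi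
        (ih _ fun a b hab => by rw [hupd 0 a b hab, hupd 1 a b hab]))
    rintro f ⟨S, hS, rfl⟩
    exact ⟨S, hS.trans (Finset.subset_insert _ _), rfl⟩

lemma cxFun_eq_add (S : Finset (Fin n)) (t : Fin n) (a : Fin n → ZMod 2) :
    cxFun S t a = a + (∏ i ∈ S, a i) • Pi.single t 1 := by
  ext j
  by_cases h : j = t <;> simp [cxFun, h]

def cxShift (l : List (Finset (Fin n) × Fin n)) (a : Fin n → ZMod 2) : Fin n → ZMod 2 :=
  (l.map fun p => (∏ i ∈ p.1, a i) • Pi.single p.2 1).sum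

lemma cxShift_apply_eq_zero {l : List (Finset (Fin n) × Fin n)} {i : Fin n}
    (hi : ∀ p ∈ l, p.2 ≠ i) (a : Fin n → ZMod 2) : cxShift l a i = 0 := by
  rw [cxShift, Pi.list_sum_apply]
  refine List.sum_eq_zero fun x hx => ?_
  simp only [List.map_map, List.mem_map, Function.comp_apply] at hx
  obtain ⟨p, hp, rfl⟩ := hx
  simp [(hi p hp).symm]

def cxEnd (p : Finset (Fin n) × Fin n) : Function.End (Fin n → ZMod 2) := cxFun p.1 p.2

lemma cxGate_list_prod (l : List (Finset (Fin n) × Fin n)) :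
    (l.map fun p => cxGate p.1 p.2).prod = funGate (l.map cxEnd).prod := by
  rw [map_list_prod, List.map_map]
  rfl

lemma MismatchFree.cxEnd_list_prod_apply {l : List (Finset (Fin n) × Fin n)}
    (hl : MismatchFree l) (a : Fin n → ZMod 2) : (l.map cxEnd).prod a = a + cxShift l a := by
  induction l with
  | nil => simp [cxShift, Function.End.one_def]
  | cons p l ih =>
    have hl' : MismatchFree l := fun q hq q' hq' =>
      hl q (List.mem_cons_of_mem _ hq) q' (List.mem_cons_of_mem _ hq')
    have hcontrols : ∏ i ∈ p.1, (a + cxShift l a) i = ∏ i ∈ p.1, a i :=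
      Finset.prod_congr rfl fun i hi => by
        rw [Pi.add_apply, cxShift_apply_eq_zero (fun q hq hqi =>
          hl q (List.mem_cons_of_mem _ hq) p List.mem_cons_self (hqi ▸ hi)), add_zero]
    change cxFun p.1 p.2 ((l.map cxEnd).prod a) = _
    rw [ih hl', cxFun_eq_add, hcontrols]
    simp only [cxShift, List.map_cons, List.sum_cons]
    abel

def cxShifts (s : Finset (Fin n)) : Set ((Fin n → ZMod 2) → Fin n → ZMod 2) :=
  {h | ∃ S ⊆ sᶜ, ∃ t ∈ s, h = fun a => (∏ i ∈ S, a i) • Pi.single t 1}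

lemma exists_cxShift_eq_of_mem_closure {s : Finset (Fin n)} {h : (Fin n → ZMod 2) → Fin n → ZMod 2}
    (hh : h ∈ AddSubmonoid.closure (cxShifts s)) :
    ∃ l : List (Finset (Fin n) × Fin n), (∀ p ∈ l, p.1 ⊆ sᶜ ∧ p.2 ∈ s) ∧ cxShift l = h := by
  induction hh using AddSubmonoid.closure_induction with
  | mem h hh =>
    obtain ⟨S, hS, t, ht, rfl⟩ := hh
    exact ⟨[(S, t)], by simp [hS, ht], funext fun a => by simp [cxShift]⟩
  | zero => exact ⟨[], by simp, funext fun a => by simp [cxShift]⟩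
  | add h h' _ _ ih ih' =>
    obtain ⟨l, hl, rfl⟩ := ih
    obtain ⟨l', hl', rfl⟩ := ih'
    refine ⟨l ++ l', fun p hp => ?_, funext fun a => by simp [cxShift]⟩
    rcases List.mem_append.mp hp with hp | hp
    exacts [hl p hp, hl' p hp]

lemma smul_single_mem_closure_cxShifts {s : Finset (Fin n)} {t : Fin n} (ht : t ∈ s)
    {F : (Fin n → ZMod 2) → ZMod 2} (hF : F ∈ AddSubmonoid.closure (monomials sᶜ)) :
    (fun a => F a • Pi.single t 1) ∈ AddSubmonoid.closure (cxShifts s) := by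
  induction hF using AddSubmonoid.closure_induction with
  | mem f hf =>
    obtain ⟨S, hS, rfl⟩ := hf
    exact AddSubmonoid.subset_closure ⟨S, hS, t, ht, rfl⟩
  | zero => convert zero_mem (AddSubmonoid.closure (cxShifts s)) using 1; simp [Pi.zero_def]
  | add f f' _ _ hf hf' =>
    convert add_mem hf hf' using 1
    simp only [Pi.add_apply, add_smul]
    rfl

lemma mem_closure_cxShifts (s : Finset (Fin n)) (g : (Fin n → ZMod 2) → Fin n → ZMod 2)
    (hg_supp : ∀ a, ∀ i ∉ s, g a i = 0) (hg_dep : ∀ a b, (∀ j ∉ s, a j = b j) → g a = g b) :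
    g ∈ AddSubmonoid.closure (cxShifts s) := by
  have hsum : g = ∑ t ∈ s, fun a => g a t • Pi.single t 1 := by
    ext a j
    by_cases hj : j ∈ s <;> simp [Finset.sum_apply, Pi.single_apply, hj, hg_supp]
  rw [hsum]
  refine sum_mem fun t ht => smul_single_mem_closure_cxShifts ht ?_
  exact mem_closure_monomials sᶜ _ fun a b hab => by
    rw [hg_dep a b fun j hj => hab j (Finset.mem_compl.2 hj)]

theorem exists_mismatchFree_cxGate_list_prod (s : Finset (Fin n))
    (g : (Fin n → ZMod 2) → Fin n → ZMod 2) (hg_supp : ∀ a, ∀ i ∉ s, g a i = 0)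
    (hg_dep : ∀ a b, (∀ j ∉ s, a j = b j) → g a = g b) :
    ∃ l, MismatchFree l ∧ (l.map fun p => cxGate p.1 p.2).prod = funGate fun a => a + g a := by
  obtain ⟨l, hl, hshift⟩ :=
    exists_cxShift_eq_of_mem_closure (mem_closure_cxShifts s g hg_supp hg_dep)
  have hfree : MismatchFree l := fun p hp q hq hpq =>
    Finset.mem_compl.1 ((hl q hq).1 hpq) (hl p hp).2
  refine ⟨l, hfree, ?_⟩
  rw [cxGate_list_prod]
  congr 1
  funext a
  rw [hfree.cxEnd_list_prod_apply, hshift]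

end CX

-- Qubit `i ∈ {1, …, n}` of the informal statement is the index `i - 1 : Fin n`.
theorem perm_conj_X_Z_pauli_decomposition_general (n m : ℕ)
    (π : Gate n) (hπ : IsPermGate π)
    (hX : ∀ i : Fin n, (i : ℕ) < m → π * xGate (Pi.single i 1) * π⁻¹ ∈ PauliGroup n)
    (hZ : ∀ j : Fin n, m ≤ (j : ℕ) → π * zGate (Pi.single j 1) * π⁻¹ ∈ PauliGroup n) :
    ∃ (φ₁ φ₂ μ : Gate n) (l : List (Finset (Fin n) × Fin n)),
      IsCliffordPerm φ₁ ∧ IsCliffordPerm φ₂ ∧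
      IsCXProduct l μ ∧ MismatchFree l ∧
      π = φ₁ * μ * φ₂ := by
  obtain ⟨σ, rfl⟩ := hπ
  let s : Finset (Fin n) := Finset.univ.filter fun i => (i : ℕ) < m
  obtain ⟨α, g, hg_supp, hg_dep, hσ⟩ := exists_affineEquiv_comp_add σ s
    (fun i hi => exists_apply_add_of_conj_xGate_mem σ _ (hX i (by simpa [s] using hi)))
    (fun j hj => by
      obtain ⟨r, c, h⟩ := exists_dotProduct_of_conj_zGate_mem σ _ (hZ j (by simpa [s] using hj))
      exact ⟨r, c, fun y => by simpa using h y⟩)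
  obtain ⟨l, hl, hprod⟩ := exists_mismatchFree_cxGate_list_prod s g hg_supp hg_dep
  refine ⟨permGate α.toEquiv, permGate 1, _, l,
    ⟨⟨_, rfl⟩, permGate_mem_cliffordHierarchy_two α⟩,
    ⟨⟨1, rfl⟩, permGate_mem_cliffordHierarchy_two (AffineEquiv.refl _ _)⟩,
    ⟨fun p hp => hl p hp p hp, rfl⟩, hl, ?_⟩
  rw [hprod, permGate_one, mul_one]
  exact (congrArg funGate (funext hσ)).trans (funGate.map_mul _ _)

/-- If `π` is a permutation gate with `π Xᵢ π⁻¹ ∈ 𝒫ₙ` for `i = 1, …, m` and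
`π Zⱼ π⁻¹ ∈ 𝒫ₙ` for `j = m+1, …, n`, then `π = φ₁ μ φ₂` with `φ₁, φ₂` Clifford
permutation gates and `μ` a mismatch-free product of `C*X` gates.
(Qubit `i ∈ {1, …, n}` is the index `i - 1 : Fin n`, so `Xᵢ = xGate (Pi.single (i-1) 1)`.) -/
theorem perm_conj_X_Z_pauli_decomposition (n m : ℕ) (hn : 1 ≤ n) (hm : m ≤ n)
    (π : Gate n) (hπ : IsPermGate π)
    (hX : ∀ i : Fin n, (i : ℕ) < m → π * xGate (Pi.single i 1) * π⁻¹ ∈ PauliGroup n)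
    (hZ : ∀ j : Fin n, m ≤ (j : ℕ) → π * zGate (Pi.single j 1) * π⁻¹ ∈ PauliGroup n) :
    ∃ (φ₁ φ₂ μ : Gate n) (l : List (Finset (Fin n) × Fin n)),
      IsCliffordPerm φ₁ ∧ IsCliffordPerm φ₂ ∧
      IsCXProduct l μ ∧ MismatchFree l ∧
      π = φ₁ * μ * φ₂ :=
  perm_conj_X_Z_pauli_decomposition_general n m π hπ hX hZ
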